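/- If Γ',Δ is a context, Γ ≤ Γ', and T is a Böhm forest that is maximally co-contracted with respect to Γ,Δ, then [Γ',Δ / Γ,Δ]T ≈ [Γ'/Γ]T, where ≈ is bisimilarity treating sums of elimination alternatives as sets (i.e., up to associativity, commutativity, and idempotence of +). -/

import Mathlib

/-!  Formalization of proof search in the sequent calculus LJT (λ̄) with
coinductive Böhm trees/forests (as M-types), following Espírito Santo,
Matthes, Pinto, "A coinductive approach to proof search". -/

namespace LambdaBar

/-- Implicational formulas over atoms (natural numbers). -/
inductive Ty : Type
  | at : ℕ → Ty
  | imp : Ty → Ty → Ty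
  deriving DecidableEq

/-- Contexts: finite lists of declarations `x : A`. -/
abbrev Ctx := List (ℕ × Ty)

/-- A context declares no variable twice. -/
def IsCtx (Γ : Ctx) : Prop := (Γ.map Prod.fst).Nodup

/-- A (possibly redundant) list of declarations is functional, i.e. its
set of declarations is a context. -/
def FunCtx (Γ : Ctx) : Prop := ∀ x A A', (x, A) ∈ Γ → (x, A') ∈ Γ → A = A'

/-- `Ty.mkImp [B₁,…,Bₖ] p` is `B₁ ⊃ … ⊃ Bₖ ⊃ p`. -/
def Ty.mkImp : List Ty → ℕ → Ty
  | [], p => .at p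
  | A :: As, p => .imp A (Ty.mkImp As p)

/-- The vector of premises of a formula: `(A⃗ ⊃ p).args = A⃗`. -/
def Ty.args : Ty → List Ty
  | .at _ => []
  | .imp A B => A :: B.args

/-- The target atom of a formula: `(A⃗ ⊃ p).tgt = p`. -/
def Ty.tgt : Ty → ℕ
  | .at p => p
  | .imp _ B => B.tgt

/-- The set of types declared in a context: `|Γ|`. -/
def tyset (Γ : Ctx) : Finset Ty := (Γ.map Prod.snd).toFinset

/-- `Γ ≤ Γ'`: inclusion of contexts declaring the same set of types. -/
def CtxLe (Γ Γ' : Ctx) : Prop := Γ ⊆ Γ' ∧ tyset Γ = tyset Γ'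

/-! ### Finite λ̄-terms -/

inductive Tm : Type
  | lam : ℕ → Ty → Tm → Tm
  | app : ℕ → List Tm → Tm

/-- Inductive typing of finite λ̄-terms (cut-free system λ̄): rules
`RIntro` and `LVecIntro`. -/
inductive TypedTm : Ctx → Tm → Ty → Prop
  | rIntro {Γ : Ctx} {x : ℕ} {A B : Ty} {t : Tm} :
      TypedTm ((x, A) :: Γ) t B → TypedTm Γ (.lam x A t) (.imp A B)
  | lVecIntro {Γ : Ctx} {x : ℕ} {p : ℕ} {Bs : List Ty} {ts : List Tm} :
      (x, Ty.mkImp Bs p) ∈ Γ → ts.length = Bs.length →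
      (∀ i t B, ts[(i : ℕ)]? = some t → Bs[(i : ℕ)]? = some B → TypedTm Γ t B) →
      TypedTm Γ (.app x ts) (.at p)

/-- Renaming `[x/y]t` on finite terms (replacing free occurrences of `y` by
`x`, respecting shadowing). -/
def Tm.rename (x y : ℕ) : Tm → Tm
  | .lam z A t => .lam z A (if z = y then t else t.rename x y)
  | .app z ts => .app (if z = y then x else z) (ts.attach.map fun u => u.1.rename x y)
decreasing_by
  all_goals simp_wf
  all_goals try omega
  all_goals (have := List.sizeOf_lt_of_mem u.2; omega)

/-! ### Böhm trees (the coinductive terms of λ̄^co), as an M-type -/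

/-- Polynomial functor for Böhm trees: a node is either a λ-abstraction
(one child) or an application `x⟨N₁,…,Nₖ⟩` (`k` children). -/
def BTP : PFunctor.{0} :=
  ⟨Sum (ℕ × Ty) (ℕ × ℕ), fun a =>
    match a with
    | .inl _ => PUnit
    | .inr (_, k) => Fin k⟩

/-- Böhm trees, the (co)terms of system λ̄^co. -/
abbrev BTree : Type := BTP.M

def BTree.lam (x : ℕ) (A : Ty) (N : BTree) : BTree :=
  PFunctor.M.mk ⟨.inl (x, A), fun _ => N⟩

def BTree.app (x : ℕ) (Ns : List BTree) : BTree :=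
  PFunctor.M.mk ⟨.inr (x, Ns.length), fun i => Ns.get i⟩

/-- Embedding of finite λ̄-terms into Böhm trees. -/
def Tm.toBTree : Tm → BTree
  | .lam x A t => BTree.lam x A t.toBTree
  | .app x ts => BTree.app x (ts.attach.map fun u => u.1.toBTree)
decreasing_by
  all_goals simp_wf
  all_goals try omega
  all_goals (have := List.sizeOf_lt_of_mem u.2; omega)

/-- One step of the coinductive typing of Böhm trees: the rules `RIntro`
and `LVecIntro`, read backwards. -/
def TTStep (R : Ctx → BTree → Ty → Prop) (Γ : Ctx) (N : BTree) (A : Ty) : Prop :=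
  match N.dest with
  | ⟨.inl (x, B), f⟩ => ∃ C, A = .imp B C ∧ R ((x, B) :: Γ) (f PUnit.unit) C
  | ⟨.inr (x, k), f⟩ => ∃ p Bs, A = .at p ∧ (x, Ty.mkImp Bs p) ∈ Γ ∧
      Bs.length = k ∧ ∀ (i : Fin k) (B : Ty), Bs[i.val]? = some B → R Γ (f i) B

/-- Coinductive typing of Böhm trees (system λ̄^co): the greatest fixed point
of `TTStep`, i.e. the union of all relations closed backward w.r.t. the rules. -/
def CoTypedT (Γ : Ctx) (N : BTree) (A : Ty) : Prop :=
  ∃ R : Ctx → BTree → Ty → Prop,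
    (∀ Γ' N' A', R Γ' N' A' → TTStep R Γ' N' A') ∧ R Γ N A

/-! ### Böhm forests (the coinductive terms of λ̄^co_Σ), as an M-type -/

/-- Polynomial functor for Böhm forests: a node is either a λ-abstraction
(one child) or a finite sum of elimination alternatives, recorded as the
list of pairs (head variable, arity); a child is addressed by an
alternative index together with an argument position. -/
def BFP : PFunctor.{0} :=
  ⟨Sum (ℕ × Ty) (List (ℕ × ℕ)), fun a =>
    match a with
    | .inl _ => PUnit
    | .inr l => Σ i : Fin l.length, Fin (l.get i).2⟩

/-- Böhm forests, the terms of system λ̄^co_Σ. -/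
abbrev BForest : Type := BFP.M

def BForest.lam (x : ℕ) (A : Ty) (N : BForest) : BForest :=
  PFunctor.M.mk ⟨.inl (x, A), fun _ => N⟩

/-- The empty sum `O`. -/
def BForest.obot : BForest :=
  PFunctor.M.mk ⟨.inr [], fun c => absurd c.1.isLt (by simp)⟩

/-- Sum of elimination alternatives `Σᵢ xᵢ⟨Nᵢ₁,…⟩`. -/
def BForest.alts (Es : List (ℕ × List BForest)) : BForest :=
  PFunctor.M.mk ⟨.inr (Es.map fun e => (e.1, e.2.length)), fun c =>
    (((Es[c.1.val]?).bind fun e => e.2[c.2.val]?).getD BForest.obot)⟩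

/-- A single elimination alternative `x⟨N₁,…,Nₖ⟩` as a forest. -/
def BForest.elim (x : ℕ) (Ns : List BForest) : BForest := BForest.alts [(x, Ns)]

/-- A variable fresh for the domain of `Γ`. -/
def freshVar (Γ : Ctx) : ℕ := (Γ.map Prod.fst).foldr max 0 + 1

/-- The solution space `S(Γ ⊢ A)`, defined by corecursion:
`S(Γ ⊢ A⊃B) = λx^A. S(Γ,x:A ⊢ B)` (with `x` fresh) and
`S(Γ ⊢ p) = Σ_{(y:B⃗⊃p)∈Γ} y⟨S(Γ ⊢ Bⱼ)⟩ⱼ`. -/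
def solSpace : Ctx × Ty → BForest :=
  PFunctor.M.corec fun s =>
    match s with
    | (Γ, .imp A B) => ⟨.inl (freshVar Γ, A), fun _ => ((freshVar Γ, A) :: Γ, B)⟩
    | (Γ, .at p) =>
      let ds := Γ.filter fun d => d.2.tgt = p
      ⟨.inr (ds.map fun d => (d.1, d.2.args.length)), fun c =>
        match ds[c.1.val]? with
        | some d => (Γ, (d.2.args[c.2.val]?).getD (.at p))
        | none => (Γ, .at p)⟩

/-- One step of the coinductive typing of Böhm forests (system λ̄^co_Σ):
rules `RIntro`, `LVecIntro` and `Alts`, read backwards. -/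
def TFStep (R : Ctx → BForest → Ty → Prop) (Γ : Ctx) (N : BForest) (A : Ty) : Prop :=
  match N.dest with
  | ⟨.inl (x, B), f⟩ => ∃ C, A = .imp B C ∧ R ((x, B) :: Γ) (f PUnit.unit) C
  | ⟨.inr l, f⟩ => ∃ p, A = .at p ∧
      ∀ i : Fin l.length, ∃ Bs : List Ty,
        Bs.length = (l.get i).2 ∧ ((l.get i).1, Ty.mkImp Bs p) ∈ Γ ∧
        ∀ (j : Fin (l.get i).2) (B : Ty), Bs[j.val]? = some B → R Γ (f ⟨i, j⟩) B

/-- Coinductive typing of Böhm forests (system λ̄^co_Σ). -/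
def CoTypedF (Γ : Ctx) (N : BForest) (A : Ty) : Prop :=
  ∃ R : Ctx → BForest → Ty → Prop,
    (∀ Γ' N' A', R Γ' N' A' → TFStep R Γ' N' A') ∧ R Γ N A

/-- One step of the membership relation between Böhm trees and Böhm forests. -/
def MemStep (R : BTree → BForest → Prop) (M : BTree) (T : BForest) : Prop :=
  match M.dest, T.dest with
  | ⟨.inl xA, f⟩, ⟨.inl xA', g⟩ => xA = xA' ∧ R (f PUnit.unit) (g PUnit.unit)
  | ⟨.inr (x, k), f⟩, ⟨.inr l, g⟩ =>
      ∃ i : Fin l.length, (l.get i).1 = x ∧ (l.get i).2 = k ∧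
        ∀ (j : Fin k) (j' : Fin (l.get i).2), j.val = j'.val → R (f j) (g ⟨i, j'⟩)
  | _, _ => False

/-- Coinductive membership `mem(M, T)` of a Böhm tree in a Böhm forest. -/
def Mem (M : BTree) (T : BForest) : Prop :=
  ∃ R : BTree → BForest → Prop,
    (∀ M' T', R M' T' → MemStep R M' T') ∧ R M T

/-- One step of (plain, structural) bisimilarity of Böhm forests. -/
def BisimStep (R : BForest → BForest → Prop) (T U : BForest) : Prop :=
  match T.dest, U.dest with
  | ⟨.inl xA, f⟩, ⟨.inl xA', g⟩ => xA = xA' ∧ R (f PUnit.unit) (g PUnit.unit)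
  | ⟨.inr l, f⟩, ⟨.inr l', g⟩ => l = l' ∧
      ∀ (i : Fin l.length) (i' : Fin l'.length) (j : Fin (l.get i).2)
        (j' : Fin (l'.get i').2), i.val = i'.val → j.val = j'.val →
          R (f ⟨i, j⟩) (g ⟨i', j'⟩)
  | _, _ => False

/-- Bisimilarity `≅` of Böhm forests (not identifying sums up to permutation
or multiplicity). -/
def Bisim (T U : BForest) : Prop :=
  ∃ R : BForest → BForest → Prop,
    (∀ T' U', R T' U' → BisimStep R T' U') ∧ R T U

/-- One step of bisimilarity treating sums of elimination alternatives as
sets: each summand on either side is matched by a summand on the other. -/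
def SBisimStep (R : BForest → BForest → Prop) (T U : BForest) : Prop :=
  match T.dest, U.dest with
  | ⟨.inl xA, f⟩, ⟨.inl xA', g⟩ => xA = xA' ∧ R (f PUnit.unit) (g PUnit.unit)
  | ⟨.inr l, f⟩, ⟨.inr l', g⟩ =>
      (∀ i : Fin l.length, ∃ i' : Fin l'.length, l.get i = l'.get i' ∧
        ∀ (j : Fin (l.get i).2) (j' : Fin (l'.get i').2), j.val = j'.val →
          R (f ⟨i, j⟩) (g ⟨i', j'⟩)) ∧
      (∀ i' : Fin l'.length, ∃ i : Fin l.length, l.get i = l'.get i' ∧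
        ∀ (j : Fin (l.get i).2) (j' : Fin (l'.get i').2), j.val = j'.val →
          R (f ⟨i, j⟩) (g ⟨i', j'⟩))
  | _, _ => False

/-- Bisimilarity `≈` of Böhm forests treating sums as sets of alternatives
(i.e. up to associativity, commutativity and idempotence of `+`). -/
def SBisim (T U : BForest) : Prop :=
  ∃ R : BForest → BForest → Prop,
    (∀ T' U', R T' U' → SBisimStep R T' U') ∧ R T U

/-- Lookup of the type of a variable in a context. -/
def ctxLookup (Γ : Ctx) (z : ℕ) : Option Ty :=
  (Γ.find? fun d => d.1 = z).map Prod.snd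

/-- Heads replacing a head variable `z` under co-contraction `[Γ'/Γ]`:
if `(z:A) ∈ Γ`, all `w` with `(w:A) ∈ {(z:A)} ∪ (Γ'∖Γ)`; otherwise just `z`. -/
def expandHeads (Γ Γ' : Ctx) (z : ℕ) : List ℕ :=
  match ctxLookup Γ z with
  | some A => z :: ((Γ'.filter fun d => d ∉ Γ ∧ d.2 = A).map Prod.fst)
  | none => [z]

/-- Co-contraction `[Γ'/Γ]T` on Böhm forests (intended for `Γ ≤ Γ'`),
defined by corecursion. -/
def cocontract (Γ Γ' : Ctx) : BForest → BForest :=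
  PFunctor.M.corec fun T =>
    match T.dest with
    | ⟨.inl xA, f⟩ => ⟨.inl xA, fun _ => f PUnit.unit⟩
    | ⟨.inr l, f⟩ =>
      let entries : List (ℕ × ℕ × Fin l.length) :=
        (List.finRange l.length).flatMap fun i =>
          (expandHeads Γ Γ' (l.get i).1).map fun w => (w, (l.get i).2, i)
      ⟨.inr (entries.map fun e => (e.1, e.2.1)), fun c =>
        match entries[c.1.val]? with
        | some e =>
            if h : c.2.val < (l.get e.2.2).2 then f ⟨e.2.2, ⟨c.2.val, h⟩⟩ else T
        | none => T⟩

/-- Simultaneous renaming on Böhm trees: replaces every free occurrence of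
a variable from `ys` by `x`, respecting shadowing by λ-binders; for
`ys = [x₁,…,xₙ]` and `x = x₁` this is the substitution `[x₁/x₁,…,xₙ]`. -/
def renameT (x : ℕ) (ys : List ℕ) (M : BTree) : BTree :=
  PFunctor.M.corec
    (fun s : BTree × List ℕ =>
      match s.1.dest with
      | ⟨.inl (z, A), f⟩ => ⟨.inl (z, A), fun _ => (f PUnit.unit, s.2.filter (· ≠ z))⟩
      | ⟨.inr (z, k), f⟩ =>
          ⟨.inr (if z ∈ s.2 then x else z, k), fun j => (f j, s.2)⟩)
    (M, ys)

/-- One step of "variable `x` does not occur free in the forest `T`". -/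
def NotFreeStep (R : ℕ → BForest → Prop) (x : ℕ) (T : BForest) : Prop :=
  match T.dest with
  | ⟨.inl (z, _), f⟩ => z = x ∨ R x (f PUnit.unit)
  | ⟨.inr l, f⟩ => (∀ e ∈ l, e.1 ≠ x) ∧ ∀ c, R x (f c)

/-- `x ∉ FV(T)` for a Böhm forest, coinductively. -/
def NotFree (x : ℕ) (T : BForest) : Prop :=
  ∃ R : ℕ → BForest → Prop,
    (∀ x' T', R x' T' → NotFreeStep R x' T') ∧ R x T

/-- The special case `[x₁+⋯+xₙ/x₁]T` of co-contraction, where `xs` lists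
`x₁,…,xₙ`: every application headed by `x₁` is replaced by the sum of the
applications headed by each `xᵢ`. -/
def cocontractVars (x₁ : ℕ) (xs : List ℕ) : BForest → BForest :=
  PFunctor.M.corec fun T =>
    match T.dest with
    | ⟨.inl xA, f⟩ => ⟨.inl xA, fun _ => f PUnit.unit⟩
    | ⟨.inr l, f⟩ =>
      let entries : List (ℕ × ℕ × Fin l.length) :=
        (List.finRange l.length).flatMap fun i =>
          (if (l.get i).1 = x₁ then xs else [(l.get i).1]).map fun w =>
            (w, (l.get i).2, i)
      ⟨.inr (entries.map fun e => (e.1, e.2.1)), fun c =>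
        match entries[c.1.val]? with
        | some e =>
            if h : c.2.val < (l.get e.2.2).2 then f ⟨e.2.2, ⟨c.2.val, h⟩⟩ else T
        | none => T⟩

/-- One step of "maximally co-contracted w.r.t. the (local) context `Θ`":
every head variable of a summand is declared in `Θ`, and for every variable
`y` with the same type in `Θ` the sum also contains a summand headed by `y`
with bisimilar arguments; under a λ, the context is locally extended. -/
def MCCStep (R : Ctx → BForest → Prop) (Θ : Ctx) (T : BForest) : Prop :=
  match T.dest with
  | ⟨.inl (x, A), f⟩ => R ((x, A) :: Θ) (f PUnit.unit)
  | ⟨.inr l, f⟩ =>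
      (∀ i : Fin l.length,
        (∃ A, ((l.get i).1, A) ∈ Θ) ∧
        ∀ (y : ℕ) (A : Ty), ((l.get i).1, A) ∈ Θ → (y, A) ∈ Θ →
          ∃ i' : Fin l.length, (l.get i').1 = y ∧ (l.get i').2 = (l.get i).2 ∧
            ∀ (j : Fin (l.get i).2) (j' : Fin (l.get i').2), j.val = j'.val →
              Bisim (f ⟨i, j⟩) (f ⟨i', j'⟩)) ∧
      ∀ c, R Θ (f c)

/-- `T` is maximally co-contracted w.r.t. `Θ`, coinductively. -/
def MaxCoContracted (Θ : Ctx) (T : BForest) : Prop :=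
  ∃ R : Ctx → BForest → Prop,
    (∀ Θ' T', R Θ' T' → MCCStep R Θ' T') ∧ R Θ T

/-! ### The finitary system λ̄^gfp_Σ -/

/-- Atomic sequents `Γ ⊢ p`. -/
structure ASeq : Type where
  ctx : Ctx
  tgt : ℕ

/-- `σ ≤ σ'` on atomic sequents: `Γ ≤ Γ'` and equal target atoms. -/
def ASeqLe (σ σ' : ASeq) : Prop :=
  σ.ctx ⊆ σ'.ctx ∧ tyset σ.ctx = tyset σ'.ctx ∧ σ.tgt = σ'.tgt

/-- Finitary terms of λ̄^gfp_Σ: `N ::= λx^A.N | gfp X^σ.ΣᵢEᵢ | X^σ` with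
`E ::= x⟨N₁,…,Nₖ⟩`; fixed-point variables are names (naturals) annotated
with atomic sequents. -/
inductive FTm : Type
  | lam : ℕ → Ty → FTm → FTm
  | fpvar : ℕ → ASeq → FTm
  | gfp : ℕ → ASeq → List (ℕ × List FTm) → FTm

/-- `λz₁^{A₁}…zₙ^{Aₙ}.t` for a list of declarations. -/
def lams : Ctx → FTm → FTm
  | [], t => t
  | (x, A) :: r, t => .lam x A (lams r t)

/-- Fresh variables `z₁,…,zₙ` declared with the premises `As`, extending `Γ`. -/
def extArgs (Γ : Ctx) (As : List Ty) : Ctx :=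
  (List.range As.length).zipWith (fun i A => (freshVar Γ + i, A)) As

/-- A fresh fixed-point variable name w.r.t. `Ξ`. -/
def freshFP (Ξ : List (ℕ × ASeq)) : ℕ := (Ξ.map Prod.fst).foldr max 0 + 1

/-- The side condition of the first clause of the definition of `F`:
for `C = A⃗ ⊃ p` and a declaration `X : (Θ ⊢ q)` of `Ξ`:
`p = q`, `Θ ⊆ Γ` and `|Θ| = |Γ| ∪ {A₁,…,Aₙ}`. -/
def HitCond (Γ : Ctx) (As : List Ty) (p : ℕ) (e : ℕ × ASeq) : Prop :=
  e.2.tgt = p ∧ e.2.ctx ⊆ Γ ∧ tyset e.2.ctx = tyset Γ ∪ As.toFinset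

/-- The recursion computing the finitary representation `F(Γ ⊢ C)(Ξ)`,
presented as an inductive graph relation: `FDef Γ C Ξ t` holds iff the
recursive computation of `F(Γ ⊢ C)(Ξ)` terminates with result `t`. -/
inductive FDef : Ctx → Ty → List (ℕ × ASeq) → FTm → Prop
  | hit (Γ : Ctx) (C : Ty) (Ξ : List (ℕ × ASeq)) (i : ℕ) (e : ℕ × ASeq) :
      Ξ[i]? = some e → HitCond Γ C.args C.tgt e →
      (∀ i' e', i < i' → Ξ[i']? = some e' → ¬ HitCond Γ C.args C.tgt e') →
      FDef Γ C Ξ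
        (lams (extArgs Γ C.args)
          (.fpvar e.1 ⟨Γ ++ extArgs Γ C.args, C.tgt⟩))
  | miss (Γ : Ctx) (C : Ty) (Ξ : List (ℕ × ASeq)) (alts : List (ℕ × List FTm)) :
      (∀ e ∈ Ξ, ¬ HitCond Γ C.args C.tgt e) →
      alts.length =
        ((Γ ++ extArgs Γ C.args).filter fun d => d.2.tgt = C.tgt).length →
      (∀ (i : ℕ) (d : ℕ × Ty) (a : ℕ × List FTm),
        ((Γ ++ extArgs Γ C.args).filter fun d => d.2.tgt = C.tgt)[i]? = some d →
        alts[i]? = some a → a.1 = d.1) →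
      (∀ (i : ℕ) (d : ℕ × Ty) (a : ℕ × List FTm),
        ((Γ ++ extArgs Γ C.args).filter fun d => d.2.tgt = C.tgt)[i]? = some d →
        alts[i]? = some a → a.2.length = d.2.args.length) →
      (∀ (i : ℕ) (d : ℕ × Ty) (a : ℕ × List FTm) (j : ℕ) (B : Ty) (t : FTm),
        ((Γ ++ extArgs Γ C.args).filter fun d => d.2.tgt = C.tgt)[i]? = some d →
        alts[i]? = some a → d.2.args[j]? = some B → a.2[j]? = some t →
        FDef (Γ ++ extArgs Γ C.args) B
          (Ξ ++ [(freshFP Ξ, ⟨Γ ++ extArgs Γ C.args, C.tgt⟩)]) t) →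
      FDef Γ C Ξ
        (lams (extArgs Γ C.args)
          (.gfp (freshFP Ξ) ⟨Γ ++ extArgs Γ C.args, C.tgt⟩ alts))

/-- Subformulas of a formula. -/
def Ty.subs : Ty → Finset Ty
  | .at p => {.at p}
  | .imp A B => insert (.imp A B) (A.subs ∪ B.subs)

/-- A finite set of formulas is subformula-closed. -/
def SubClosed (𝒜 : Finset Ty) : Prop := ∀ A ∈ 𝒜, A.subs ⊆ 𝒜

/-- The `𝒜`-invariant for a sequent `Γ ⊢ C` and a vector `Ξ` of fixed-point
declarations `Xᵢ : (Θᵢ ⊢ qᵢ)`: (i) `|Γ| ∪ {C} ⊆ 𝒜`; (ii) `Θ₁ ⊆ … ⊆ Θₘ = Γ`;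
(iii) each `qⱼ` is a subformula of a formula of `|Γ|`; (iv) the strippings
of the sequents of `Ξ` are pairwise distinct. -/
def AInvariant (𝒜 : Finset Ty) (Γ : Ctx) (C : Ty) (Ξ : List (ℕ × ASeq)) : Prop :=
  (tyset Γ ∪ {C} ⊆ 𝒜) ∧
  (∀ (i : ℕ) (e e' : ℕ × ASeq), Ξ[i]? = some e → Ξ[(i+1)]? = some e' →
      e.2.ctx ⊆ e'.2.ctx) ∧
  (∀ e : ℕ × ASeq, Ξ.getLast? = some e → e.2.ctx = Γ) ∧
  (∀ e ∈ Ξ, ∃ A ∈ tyset Γ, (Ty.at e.2.tgt) ∈ A.subs) ∧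
  (Ξ.map fun e => ((tyset e.2.ctx, e.2.tgt) : Finset Ty × ℕ)).Nodup

/-- `t` has no free occurrence of a fixed-point variable outside the list
`b` of bound names (recall that `gfp X^σ` binds all `X^{σ'}`). -/
inductive FPClosed : List ℕ → FTm → Prop
  | lam {b x A t} : FPClosed b t → FPClosed b (.lam x A t)
  | fpvar {b X σ} : X ∈ b → FPClosed b (.fpvar X σ)
  | gfp {b X σ alts} : (∀ a ∈ alts, ∀ t ∈ a.2, FPClosed (X :: b) t) →
      FPClosed b (.gfp X σ alts)

/-- Environments for the interpretation: finite assignments of Böhm forests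
to fixed-point variables typed by atomic sequents. -/
abbrev Env : Type := List (ℕ × ASeq × BForest)

def envLookup (ξ : Env) (X : ℕ) : Option (ASeq × BForest) :=
  (ξ.find? fun e => e.1 = X).map Prod.snd

/-- The label of a sum node for a list of alternatives. -/
def altsLabel (alts : List (ℕ × List FTm)) : List (ℕ × ℕ) :=
  alts.map fun e => (e.1, e.2.length)

/-- One step of the interpretation relation `⟦t⟧_ξ = N` of finitary terms as
Böhm forests: `⟦λx^A.t⟧` commutes with λ; `⟦X^{σ'}⟧_ξ = [σ'/σ]ξ(X^σ)`
(co-contraction) for the unique binding of `X` in `ξ`; and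
`⟦gfp X^σ.ΣᵢEᵢ⟧_ξ` is the forest `N` with `N = Σᵢ⟦Eᵢ⟧_{ξ∪[X^σ↦N]}`. -/
def InterpStep (R : FTm → Env → BForest → Prop) :
    FTm → Env → BForest → Prop
  | .lam x A t, ξ, N =>
      ∃ g, N.dest = ⟨.inl (x, A), g⟩ ∧ R t ξ (g PUnit.unit)
  | .fpvar X σ', ξ, N =>
      ∃ (σ : ASeq) (M : BForest), envLookup ξ X = some (σ, M) ∧ ASeqLe σ σ' ∧
        N = cocontract σ.ctx σ'.ctx M
  | .gfp X σ alts, ξ, N =>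
      ∃ g, N.dest = ⟨.inr (altsLabel alts), g⟩ ∧
        ∀ (c : Σ i : Fin (altsLabel alts).length, Fin ((altsLabel alts).get i).2)
          (a : ℕ × List FTm) (t : FTm),
            alts[c.1.val]? = some a → a.2[c.2.val]? = some t →
              R t (ξ ++ [(X, σ, N)]) (g c)

/-- The interpretation relation `⟦t⟧_ξ = N`, coinductively
(as the greatest fixed point of `InterpStep`). -/
def Interp (t : FTm) (ξ : Env) (N : BForest) : Prop :=
  ∃ R : FTm → Env → BForest → Prop,
    (∀ t' ξ' N', R t' ξ' N' → InterpStep R t' ξ' N') ∧ R t ξ N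

end LambdaBar

open LambdaBar

/-! Every summand `w⟨…⟩` that `[Γ',Δ/Γ,Δ]` produces but `[Γ'/Γ]` does not comes from a head `z`
declared in `Δ` with some type `A`, and `w : A` is declared in `Γ'` but not in `Γ`. Since `Γ` and
`Γ'` declare the same types, some `y : A` is declared in `Γ`, and maximal co-contraction provides a
summand `y⟨…⟩` with the same arguments, which `[Γ'/Γ]` expands to `w⟨…⟩`. Conversely `[Γ'/Γ]`
expands nothing that `[Γ',Δ/Γ,Δ]` does not, as `Γ'` and `Δ` are disjoint. Structural
bisimilarity of Böhm forests is equality, so matched summands have literally equal arguments. -/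

namespace LambdaBar

section Contexts

theorem IsCtx.funCtx {Γ : Ctx} (h : IsCtx Γ) : FunCtx Γ := fun _ _ _ hA hA' =>
  congrArg Prod.snd (List.inj_on_of_nodup_map h hA hA' rfl)

theorem FunCtx.mono {Γ Γ' : Ctx} (h : FunCtx Γ') (hsub : Γ ⊆ Γ') : FunCtx Γ :=
  fun x A A' hA hA' => h x A A' (hsub hA) (hsub hA')

theorem IsCtx.disjoint_of_append {Γ Δ : Ctx} (h : IsCtx (Γ ++ Δ)) : Γ.Disjoint Δ := by
  rw [IsCtx, List.map_append] at h
  exact fun d hΓ hΔ => List.disjoint_of_nodup_append h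
    (List.mem_map_of_mem hΓ) (List.mem_map_of_mem hΔ)

theorem mem_of_ctxLookup_eq_some {Γ : Ctx} {z : ℕ} {A : Ty} (h : ctxLookup Γ z = some A) :
    (z, A) ∈ Γ := by
  obtain ⟨d, hd, rfl⟩ := Option.map_eq_some_iff.1 h
  have hz : d.1 = z := by simpa using List.find?_some hd
  exact hz ▸ List.mem_of_find?_eq_some hd

theorem FunCtx.ctxLookup_eq_some {Γ : Ctx} (hΓ : FunCtx Γ) {z : ℕ} {A : Ty} (h : (z, A) ∈ Γ) :
    ctxLookup Γ z = some A := by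
  obtain ⟨d, hd⟩ : ∃ d, Γ.find? (fun d => d.1 = z) = some d :=
    Option.isSome_iff_exists.1 (List.find?_isSome.2 ⟨_, h, by simp⟩)
  have hmem : (z, d.2) ∈ Γ := mem_of_ctxLookup_eq_some (by simp [ctxLookup, hd])
  simp [ctxLookup, hd, hΓ z _ _ hmem h]

theorem ctxLookup_append_of_eq_some {Γ Δ : Ctx} {z : ℕ} {A : Ty}
    (h : ctxLookup Γ z = some A) : ctxLookup (Γ ++ Δ) z = some A := by
  simp only [ctxLookup, List.find?_append, Option.map_or] at h ⊢
  simp [h]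

theorem mem_expandHeads_iff {Γ Γ' : Ctx} {z w : ℕ} :
    w ∈ expandHeads Γ Γ' z ↔
      w = z ∨ ∃ A, ctxLookup Γ z = some A ∧ (w, A) ∈ Γ' ∧ (w, A) ∉ Γ := by
  unfold expandHeads
  rcases ctxLookup Γ z with _ | A
  · simp
  · simp only [List.mem_cons, List.mem_map, List.mem_filter, decide_eq_true_eq, Prod.exists,
      Option.some.injEq, exists_eq_left']
    constructor
    · rintro (rfl | ⟨w, B, ⟨hB, hnot, rfl⟩, rfl⟩) <;> simp_all
    · rintro (rfl | ⟨hw, hnot⟩) <;> simp_all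

theorem expandHeads_subset_expandHeads_append {Γ Γ' Δ : Ctx} (hdisj : Γ'.Disjoint Δ) (z : ℕ) :
    expandHeads Γ Γ' z ⊆ expandHeads (Γ ++ Δ) (Γ' ++ Δ) z := by
  intro w hw
  rcases mem_expandHeads_iff.1 hw with rfl | ⟨A, hz, hwΓ', hwΓ⟩
  · exact mem_expandHeads_iff.2 (Or.inl rfl)
  · refine mem_expandHeads_iff.2 (Or.inr ⟨A, ctxLookup_append_of_eq_some hz,
      List.mem_append_left _ hwΓ', ?_⟩)
    exact fun h => hwΓ ((List.mem_append.1 h).resolve_right (hdisj hwΓ'))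

theorem eq_or_exists_of_mem_expandHeads_append {Γ Γ' Δ : Ctx} (hΓ : FunCtx Γ)
    (hty : tyset Γ' ⊆ tyset Γ) {z w : ℕ} (hw : w ∈ expandHeads (Γ ++ Δ) (Γ' ++ Δ) z) :
    w = z ∨ ∃ A y, (z, A) ∈ Γ ++ Δ ∧ (y, A) ∈ Γ ∧ w ∈ expandHeads Γ Γ' y := by
  rcases mem_expandHeads_iff.1 hw with rfl | ⟨A, hz, hwΓ'Δ, hwΓΔ⟩
  · exact Or.inl rfl
  have hwΓ' : (w, A) ∈ Γ' :=
    (List.mem_append.1 hwΓ'Δ).resolve_right fun h => hwΓΔ (List.mem_append_right _ h)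
  have hwΓ : (w, A) ∉ Γ := fun h => hwΓΔ (List.mem_append_left _ h)
  obtain ⟨⟨y, B⟩, hy, rfl⟩ : ∃ d ∈ Γ, d.2 = A := by
    simpa [tyset] using hty (by simpa [tyset] using ⟨w, hwΓ'⟩ : A ∈ tyset Γ')
  exact Or.inr ⟨B, y, mem_of_ctxLookup_eq_some hz, hy,
    mem_expandHeads_iff.2 (Or.inr ⟨B, hΓ.ctxLookup_eq_some hy, hwΓ', hwΓ⟩)⟩

end Contexts

section Forests

theorem Bisim.eq {T U : BForest} (h : Bisim T U) : T = U := by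
  obtain ⟨R, hR, hTU⟩ := h
  refine PFunctor.M.bisim R (fun T U hTU => ?_) T U hTU
  have hstep := hR T U hTU
  unfold BisimStep at hstep
  rcases hT : T.dest with ⟨a | l, f⟩ <;> rcases hU : U.dest with ⟨b | l', g⟩ <;>
    simp only [hT, hU] at hstep
  · obtain ⟨rfl, hfg⟩ := hstep
    exact ⟨_, f, g, rfl, rfl, fun _ => hfg⟩
  · obtain ⟨rfl, hfg⟩ := hstep
    exact ⟨_, f, g, rfl, rfl, fun c => hfg c.1 c.1 c.2 c.2 rfl rfl⟩

/-- The condition `MCCStep` imposes on a sum node, with bisimilar arguments read as equal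
(see `Bisim.eq`). -/
def HeadsSaturated (Θ : Ctx) (l : List (ℕ × ℕ)) (f : BFP.B (.inr l) → BForest) : Prop :=
  ∀ (i : Fin l.length) (y : ℕ) (A : Ty), ((l.get i).1, A) ∈ Θ → (y, A) ∈ Θ →
    ∃ i' : Fin l.length, (l.get i').1 = y ∧ (l.get i').2 = (l.get i).2 ∧
      ∀ (j : Fin (l.get i).2) (j' : Fin (l.get i').2), j.val = j'.val → f ⟨i, j⟩ = f ⟨i', j'⟩

namespace MaxCoContracted

variable {Θ : Ctx} {T : BForest}

theorem step (h : MaxCoContracted Θ T) : MCCStep MaxCoContracted Θ T := by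
  obtain ⟨R, hR, hT⟩ := h
  have hstep := hR _ _ hT
  unfold MCCStep at hstep ⊢
  rcases hd : T.dest with ⟨⟨x, A⟩ | l, f⟩ <;> rw [hd] at hstep
  · exact ⟨R, hR, hstep⟩
  · exact ⟨hstep.1, fun c => ⟨R, hR, hstep.2 c⟩⟩

theorem lam (h : MaxCoContracted Θ T) {x : ℕ} {A : Ty} {f : BFP.B (.inl (x, A)) → BForest}
    (hT : T.dest = ⟨.inl (x, A), f⟩) : MaxCoContracted ((x, A) :: Θ) (f PUnit.unit) := by
  have hstep := h.step
  rwa [MCCStep, hT] at hstep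

theorem sum (h : MaxCoContracted Θ T) {l : List (ℕ × ℕ)} {f : BFP.B (.inr l) → BForest}
    (hT : T.dest = ⟨.inr l, f⟩) : HeadsSaturated Θ l f ∧ ∀ c, MaxCoContracted Θ (f c) := by
  have hstep := h.step
  rw [MCCStep, hT] at hstep
  refine ⟨fun i y A hz hy => ?_, hstep.2⟩
  obtain ⟨i', hi', har, hbisim⟩ := (hstep.1 i).2 y A hz hy
  exact ⟨i', hi', har, fun j j' hj => (hbisim j j' hj).eq⟩

end MaxCoContracted

/-- One half of `SBisimStep` at two sum nodes. -/
def SumCovers (R : BForest → BForest → Prop) (l : List (ℕ × ℕ)) (f : BFP.B (.inr l) → BForest)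
    (l' : List (ℕ × ℕ)) (g : BFP.B (.inr l') → BForest) : Prop :=
  ∀ i : Fin l.length, ∃ i' : Fin l'.length, l.get i = l'.get i' ∧
    ∀ (j : Fin (l.get i).2) (j' : Fin (l'.get i').2), j.val = j'.val → R (f ⟨i, j⟩) (g ⟨i', j'⟩)

theorem sBisimStep_of_dest_lam {R : BForest → BForest → Prop} {T U : BForest} {xA : ℕ × Ty}
    {f g : BFP.B (.inl xA) → BForest} (hT : T.dest = ⟨.inl xA, f⟩) (hU : U.dest = ⟨.inl xA, g⟩)
    (h : R (f PUnit.unit) (g PUnit.unit)) : SBisimStep R T U := by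
  rw [SBisimStep, hT, hU]
  exact ⟨rfl, h⟩

theorem sBisimStep_of_dest_sum {R : BForest → BForest → Prop} {T U : BForest}
    {l l' : List (ℕ × ℕ)} {f : BFP.B (.inr l) → BForest} {g : BFP.B (.inr l') → BForest}
    (hT : T.dest = ⟨.inr l, f⟩) (hU : U.dest = ⟨.inr l', g⟩) (hfg : SumCovers R l f l' g)
    (hgf : SumCovers (flip R) l' g l f) : SBisimStep R T U := by
  rw [SBisimStep, hT, hU]
  refine ⟨hfg, fun i' => ?_⟩
  obtain ⟨i, hl, hR⟩ := hgf i'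
  exact ⟨i, hl.symm, fun j j' hj => hR j' j hj.symm⟩

end Forests

section Cocontract

variable {Γ Γ' : Ctx}

/-- The list `entries` that `cocontract` builds at a sum node with label `l`. -/
def cocontractEntries (Γ Γ' : Ctx) (l : List (ℕ × ℕ)) : List (ℕ × ℕ × Fin l.length) :=
  (List.finRange l.length).flatMap fun i =>
    (expandHeads Γ Γ' (l.get i).1).map fun w => (w, (l.get i).2, i)

theorem mem_cocontractEntries {l : List (ℕ × ℕ)} {e : ℕ × ℕ × Fin l.length} :
    e ∈ cocontractEntries Γ Γ' l ↔
      e.1 ∈ expandHeads Γ Γ' (l.get e.2.2).1 ∧ e.2.1 = (l.get e.2.2).2 := by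
  simp only [cocontractEntries, List.mem_flatMap, List.mem_finRange, true_and, List.mem_map]
  constructor
  · rintro ⟨i, w, hw, rfl⟩
    exact ⟨hw, rfl⟩
  · rintro ⟨hw, har⟩
    exact ⟨e.2.2, e.1, hw, by rw [← har]⟩

/-- The sum `(L, G)` is, as a set of summands, `[Γ'/Γ]` applied to the sum `(l, f)`. -/
def IsCocontractedSum (Γ Γ' : Ctx) (l : List (ℕ × ℕ)) (f : BFP.B (.inr l) → BForest)
    (L : List (ℕ × ℕ)) (G : BFP.B (.inr L) → BForest) : Prop :=
  (∀ k : Fin L.length, ∃ i : Fin l.length,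
    (L.get k).1 ∈ expandHeads Γ Γ' (l.get i).1 ∧ (L.get k).2 = (l.get i).2 ∧
    ∀ (j : Fin (L.get k).2) (j' : Fin (l.get i).2), j.val = j'.val →
      G ⟨k, j⟩ = cocontract Γ Γ' (f ⟨i, j'⟩)) ∧
  ∀ (i : Fin l.length), ∀ w ∈ expandHeads Γ Γ' (l.get i).1, ∃ k : Fin L.length,
    L.get k = (w, (l.get i).2) ∧
    ∀ (j : Fin (L.get k).2) (j' : Fin (l.get i).2), j.val = j'.val →
      G ⟨k, j⟩ = cocontract Γ Γ' (f ⟨i, j'⟩)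

theorem cocontract_dest_lam {T : BForest} {xA : ℕ × Ty} {f : BFP.B (.inl xA) → BForest}
    (hT : T.dest = ⟨.inl xA, f⟩) :
    (cocontract Γ Γ' T).dest = ⟨.inl xA, fun _ => cocontract Γ Γ' (f PUnit.unit)⟩ := by
  rw [cocontract, PFunctor.M.dest_corec]
  simp only [hT]
  rfl

theorem cocontract_dest_sum_eq {T : BForest} {l : List (ℕ × ℕ)} {f : BFP.B (.inr l) → BForest}
    (hT : T.dest = ⟨.inr l, f⟩) :
    ∃ G, (cocontract Γ Γ' T).dest =
        ⟨.inr ((cocontractEntries Γ Γ' l).map fun e => (e.1, e.2.1)), G⟩ ∧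
      ∀ k j (e : ℕ × ℕ × Fin l.length), (cocontractEntries Γ Γ' l)[k.val]? = some e →
        ∀ h : j.val < (l.get e.2.2).2, G ⟨k, j⟩ = cocontract Γ Γ' (f ⟨e.2.2, ⟨j.val, h⟩⟩) := by
  rw [cocontract, PFunctor.M.dest_corec]
  simp only [hT]
  refine ⟨_, rfl, fun k j e he h => ?_⟩
  dsimp only [Function.comp]
  congr 1
  simp only [cocontractEntries] at he
  simp only [he]
  rw [dif_pos h]

theorem cocontract_dest_sum {T : BForest} {l : List (ℕ × ℕ)} {f : BFP.B (.inr l) → BForest}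
    (hT : T.dest = ⟨.inr l, f⟩) :
    ∃ L G, (cocontract Γ Γ' T).dest = ⟨.inr L, G⟩ ∧ IsCocontractedSum Γ Γ' l f L G := by
  obtain ⟨G, hd, hG⟩ := cocontract_dest_sum_eq (Γ := Γ) (Γ' := Γ') hT
  refine ⟨_, G, hd, fun k => ?_, fun i w hw => ?_⟩
  · have hk : k.val < (cocontractEntries Γ Γ' l).length := by simpa using k.isLt
    set e := (cocontractEntries Γ Γ' l)[k.val]
    obtain ⟨hw, har⟩ := mem_cocontractEntries.1 (List.getElem_mem hk : e ∈ _)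
    have hL : List.get _ k = (e.1, e.2.1) := by simp [e]
    refine ⟨e.2.2, hL ▸ hw, hL ▸ har, fun j j' hj => ?_⟩
    rw [hG k j e (List.getElem?_eq_getElem hk) (by omega)]
    simp only [hj]
  · obtain ⟨n, hn, he⟩ := List.getElem_of_mem (mem_cocontractEntries.2 ⟨hw, rfl⟩ :
      (w, (l.get i).2, i) ∈ cocontractEntries Γ Γ' l)
    refine ⟨⟨n, by simpa using hn⟩, by simp [he], fun j j' hj => ?_⟩
    rw [hG _ j (w, (l.get i).2, i) (by rw [List.getElem?_eq_getElem hn, he]) (hj ▸ j'.isLt)]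
    simp only [hj]

theorem IsCocontractedSum.sumCovers {Γ₁ Γ₁' Γ₂ Γ₂' : Ctx} {R : BForest → BForest → Prop}
    {l₁ l₂ L₁ L₂ : List (ℕ × ℕ)} {f₁ : BFP.B (.inr l₁) → BForest}
    {f₂ : BFP.B (.inr l₂) → BForest} {G₁ : BFP.B (.inr L₁) → BForest}
    {G₂ : BFP.B (.inr L₂) → BForest}
    (h₁ : IsCocontractedSum Γ₁ Γ₁' l₁ f₁ L₁ G₁) (h₂ : IsCocontractedSum Γ₂ Γ₂' l₂ f₂ L₂ G₂)
    (hmatch : ∀ (i : Fin l₁.length), ∀ w ∈ expandHeads Γ₁ Γ₁' (l₁.get i).1,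
      ∃ i' : Fin l₂.length, w ∈ expandHeads Γ₂ Γ₂' (l₂.get i').1 ∧ (l₂.get i').2 = (l₁.get i).2 ∧
        ∀ (j : Fin (l₁.get i).2) (j' : Fin (l₂.get i').2), j.val = j'.val →
          R (cocontract Γ₁ Γ₁' (f₁ ⟨i, j⟩)) (cocontract Γ₂ Γ₂' (f₂ ⟨i', j'⟩))) :
    SumCovers R L₁ G₁ L₂ G₂ := by
  intro k
  obtain ⟨i, hw, har, hG₁⟩ := h₁.1 k
  obtain ⟨i', hw', har', hR⟩ := hmatch i _ hw
  obtain ⟨k', hL, hG₂⟩ := h₂.2 i' _ hw'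
  refine ⟨k', by rw [hL, har', ← har], fun j j' hj => ?_⟩
  have hj₁ : j.val < (l₁.get i).2 := har ▸ j.isLt
  have hj₂ : j'.val < (l₂.get i').2 := by simpa only [hL] using j'.isLt
  rw [hG₁ j ⟨j, hj₁⟩ rfl, hG₂ j' ⟨j', hj₂⟩ rfl]
  exact hR _ _ hj

end Cocontract

theorem HeadsSaturated.exists_of_mem_expandHeads_append {Γ Γ' Δ Θ : Ctx} {l : List (ℕ × ℕ)}
    {f : BFP.B (.inr l) → BForest} (hsat : HeadsSaturated Θ l f) (hΘ : Γ ++ Δ ⊆ Θ)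
    (hΓ : FunCtx Γ) (hty : tyset Γ' ⊆ tyset Γ) (i : Fin l.length) {w : ℕ}
    (hw : w ∈ expandHeads (Γ ++ Δ) (Γ' ++ Δ) (l.get i).1) :
    ∃ i' : Fin l.length, w ∈ expandHeads Γ Γ' (l.get i').1 ∧ (l.get i').2 = (l.get i).2 ∧
      ∀ (j : Fin (l.get i).2) (j' : Fin (l.get i').2), j.val = j'.val → f ⟨i, j⟩ = f ⟨i', j'⟩ := by
  rcases eq_or_exists_of_mem_expandHeads_append hΓ hty hw with rfl | ⟨A, y, hz, hy, hwy⟩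
  · exact ⟨i, mem_expandHeads_iff.2 (Or.inl rfl), rfl, fun j j' hj => by rw [Fin.ext hj]⟩
  · obtain ⟨i', rfl, har, hf⟩ := hsat i y A (hΘ hz) (hΘ (List.mem_append_left _ hy))
    exact ⟨i', hwy, har, hf⟩

end LambdaBar

/-- Lemma 12: if `Γ',Δ` is a context, `Γ ≤ Γ'`, and `T`
is maximally co-contracted w.r.t. `Γ,Δ`, then `[Γ',Δ/Γ,Δ]T ≈ [Γ'/Γ]T`,
where `≈` treats sums of elimination alternatives as sets. -/
theorem cocontract_extension_maxCoContracted (Γ Γ' Δ : Ctx) (T : BForest)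
    (hctx : IsCtx (Γ' ++ Δ)) (hle : CtxLe Γ Γ')
    (hmcc : MaxCoContracted (Γ ++ Δ) T) :
    SBisim (cocontract (Γ ++ Δ) (Γ' ++ Δ) T) (cocontract Γ Γ' T) := by
  have hΓ : FunCtx Γ := hctx.funCtx.mono (List.Subset.trans hle.1 (List.subset_append_left _ _))
  have hdisj : Γ'.Disjoint Δ := hctx.disjoint_of_append
  refine ⟨fun U V => ∃ Θ S, Γ ++ Δ ⊆ Θ ∧ MaxCoContracted Θ S ∧
      U = cocontract (Γ ++ Δ) (Γ' ++ Δ) S ∧ V = cocontract Γ Γ' S,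
    ?_, Γ ++ Δ, T, List.Subset.refl _, hmcc, rfl, rfl⟩
  rintro _ _ ⟨Θ, S, hΘ, hS, rfl, rfl⟩
  rcases hd : S.dest with ⟨⟨x, A⟩ | l, f⟩
  · exact sBisimStep_of_dest_lam (cocontract_dest_lam hd) (cocontract_dest_lam hd)
      ⟨_, _, List.subset_cons_of_subset _ hΘ, hS.lam hd, rfl, rfl⟩
  obtain ⟨hsat, hf⟩ := hS.sum hd
  obtain ⟨L₁, G₁, hd₁, h₁⟩ := cocontract_dest_sum (Γ := Γ ++ Δ) (Γ' := Γ' ++ Δ) hd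
  obtain ⟨L₂, G₂, hd₂, h₂⟩ := cocontract_dest_sum (Γ := Γ) (Γ' := Γ') hd
  refine sBisimStep_of_dest_sum hd₁ hd₂ (h₁.sumCovers h₂ fun i w hw => ?_)
    (h₂.sumCovers h₁ fun i w hw => ?_)
  · obtain ⟨i', hw', har, hfeq⟩ := hsat.exists_of_mem_expandHeads_append hΘ hΓ hle.2.ge i hw
    exact ⟨i', hw', har, fun j j' hj => ⟨Θ, f ⟨i, j⟩, hΘ, hf _, rfl, by rw [hfeq j j' hj]⟩⟩
  · refine ⟨i, expandHeads_subset_expandHeads_append hdisj _ hw, rfl, fun j j' hj => ?_⟩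
    exact ⟨Θ, f ⟨i, j⟩, hΘ, hf _, by rw [Fin.ext hj], rfl⟩
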